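/- Let M and K be compact metrizable spaces, let π : M → K be a continuous, surjective, open map (in particular, any homeomorphism), let F be a candidate sequence on K, and let H = F ∘ π. Then for every ordinal γ and every x ∈ M, u_γ^H(x) = u_γ^F(π(x)). -/

import Mathlib

open Filter Topology Set
open scoped ENNReal

/-- A candidate sequence on a topological space `M`: a nondecreasing sequence of
nonnegative functions, starting at `0`, with bounded pointwise limit. -/
structure CandidateSeq (M : Type*) [TopologicalSpace M] where
  h : ℕ → M → ℝ
  nonneg : ∀ k x, 0 ≤ h k x
  mono : ∀ x, Monotone fun k => h k x
  zero : ∀ x, h 0 x = 0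
  limFn : M → ℝ
  tendsto_limFn : ∀ x, Tendsto (fun k => h k x) atTop (𝓝 (limFn x))
  bddAbove : ∃ B : ℝ, ∀ x, limFn x ≤ B

namespace CandidateSeq

variable {M : Type*} [TopologicalSpace M]

/-- The upper semicontinuous envelope of a `[0,∞]`-valued function:
`f~(x) = limsup_{y → x} f(y)`, the limsup including the value at `x` itself. -/
noncomputable def uscEnv (f : M → ℝ≥0∞) : M → ℝ≥0∞ := fun x => Filter.limsup f (𝓝 x)

/-- The tail functions `τ_k = h - h_k` (nonnegative, viewed in `[0,∞]`). -/
noncomputable def tau (H : CandidateSeq M) (k : ℕ) : M → ℝ≥0∞ :=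
  fun x => ENNReal.ofReal (H.limFn x - H.h k x)

/-- The transfinite sequence `u_α^H` associated to a candidate sequence, defined by
transfinite recursion: `u_0 ≡ 0`; `u_{α+1} = lim_k (u_α + τ_k)~` (the envelopes are
nonincreasing in `k`, so the limit is the infimum); at limit ordinals,
`u_α = (sup_{β<α} u_β)~`. Values are taken in `[0,∞]`. -/
noncomputable def u (H : CandidateSeq M) (α : Ordinal) : M → ℝ≥0∞ :=
  Ordinal.limitRecOn α
    (fun _ => 0)
    (fun _ v => fun x => ⨅ k : ℕ, uscEnv (fun y => v y + H.tau k y) x)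
    (fun o _ ih => uscEnv (fun y => ⨆ p : {β : Ordinal // β < o}, ih p.1 p.2 y))

/-- The order of accumulation of a candidate sequence: the least ordinal `α`
with `u_α = u_{α+1}`. -/
noncomputable def orderOfAccum (H : CandidateSeq M) : Ordinal :=
  sInf {α : Ordinal | H.u α = H.u (α + 1)}

/-- The restriction `H|_S` of a candidate sequence to a subset, as a candidate
sequence on the subspace `S`. -/
def restrict (H : CandidateSeq M) (S : Set M) : CandidateSeq S where
  h k x := H.h k x.1
  nonneg k x := H.nonneg k x.1
  mono x := H.mono x.1
  zero x := H.zero x.1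
  limFn x := H.limFn x.1
  tendsto_limFn x := H.tendsto_limFn x.1
  bddAbove := H.bddAbove.imp fun B hB x => hB x.1

/-- The pullback `F ∘ π` of a candidate sequence along a map. -/
def comp {K : Type*} [TopologicalSpace K] (F : CandidateSeq K) (π : M → K) :
    CandidateSeq M where
  h k x := F.h k (π x)
  nonneg k x := F.nonneg k (π x)
  mono x := F.mono (π x)
  zero x := F.zero (π x)
  limFn x := F.limFn (π x)
  tendsto_limFn x := F.tendsto_limFn (π x)
  bddAbove := F.bddAbove.imp fun B hB x => hB (π x)

/-- `H` uniformly dominates `F`. -/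
def UnifDominates (H F : CandidateSeq M) : Prop :=
  ∀ ε : ℝ, 0 < ε → ∀ k, ∃ l, ∀ x, F.h k x ≤ H.h l x + ε

/-- Uniform equivalence of candidate sequences. -/
def UnifEquiv (H F : CandidateSeq M) : Prop :=
  UnifDominates H F ∧ UnifDominates F H

end CandidateSeq

/-! A continuous open map `π` pushes each neighbourhood filter `𝓝 y` onto `𝓝 (π y)`, so the
u.s.c. envelope commutes with precomposition by `π`; since the recursion defining `u` only
combines values pointwise and takes envelopes, `u_γ^{F ∘ π} = u_γ^F ∘ π` follows by
transfinite induction. -/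

namespace CandidateSeq

variable {M K : Type*} [TopologicalSpace M] [TopologicalSpace K]

theorem u_zero (H : CandidateSeq M) : H.u 0 = 0 := by
  simp only [u, Ordinal.limitRecOn_zero]
  rfl

theorem u_add_one (H : CandidateSeq M) (α : Ordinal) :
    H.u (α + 1) = fun x => ⨅ k : ℕ, uscEnv (fun y => H.u α y + H.tau k y) x := by
  simp only [u, Ordinal.limitRecOn_add_one]

theorem u_limit (H : CandidateSeq M) {o : Ordinal} (ho : Order.IsSuccLimit o) :
    H.u o = uscEnv fun y => ⨆ p : {β : Ordinal // β < o}, H.u p.1 y := by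
  simp only [u, Ordinal.limitRecOn_limit _ _ _ _ ho]

theorem tau_comp (F : CandidateSeq K) (π : M → K) (k : ℕ) :
    (F.comp π).tau k = F.tau k ∘ π :=
  rfl

theorem uscEnv_comp_of_map_nhds_eq {π : M → K} {y : M} (hπ : map π (𝓝 y) = 𝓝 (π y))
    (g : K → ℝ≥0∞) : uscEnv (g ∘ π) y = uscEnv g (π y) := by
  simp only [uscEnv, ← hπ, limsup, map_map]

theorem u_comp_of_map_nhds_eq {π : M → K} (hπ : ∀ y, map π (𝓝 y) = 𝓝 (π y))
    (F : CandidateSeq K) (γ : Ordinal) : (F.comp π).u γ = F.u γ ∘ π := by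
  induction γ using Ordinal.limitRecOn with
  | zero => simp only [u_zero]; rfl
  | add_one α ih =>
    funext x
    simp only [u_add_one, tau_comp, ih, Function.comp_apply]
    exact iInf_congr fun k =>
      uscEnv_comp_of_map_nhds_eq (hπ x) fun z => F.u α z + F.tau k z
  | limit o ho ih =>
    funext x
    rw [u_limit _ ho, u_limit _ ho]
    have hsup : ∀ y, ⨆ p : {β : Ordinal // β < o}, (F.comp π).u p.1 y
        = ⨆ p : {β : Ordinal // β < o}, F.u p.1 (π y) :=
      fun y => iSup_congr fun p => congrFun (ih p.1 p.2) y
    simp only [hsup]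
    exact uscEnv_comp_of_map_nhds_eq (hπ x) fun z => ⨆ p : {β : Ordinal // β < o}, F.u p.1 z

end CandidateSeq

theorem uSeq_comp_eq_of_isOpenMap_general {M K : Type*} [TopologicalSpace M] [TopologicalSpace K]
    (π : M → K) (hπc : Continuous π) (hπo : IsOpenMap π) (F : CandidateSeq K) (γ : Ordinal)
    (x : M) :
    (F.comp π).u γ x = F.u γ (π x) :=
  congrFun (CandidateSeq.u_comp_of_map_nhds_eq (fun _ => hπo.map_nhds_eq hπc.continuousAt) F γ) x

/-- **The transfinite sequence of a pullback along an open map**: if `π : M → K` is a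
continuous, surjective, open map (e.g. a homeomorphism), `F` a candidate sequence on `K`,
and `H = F ∘ π`, then `u_γ^H(x) = u_γ^F(π x)` for every ordinal `γ` and every `x ∈ M`. -/
theorem uSeq_comp_eq_of_isOpenMap {M K : Type*} [TopologicalSpace M] [CompactSpace M]
    [TopologicalSpace.MetrizableSpace M] [TopologicalSpace K] [CompactSpace K]
    [TopologicalSpace.MetrizableSpace K] (π : M → K) (hπc : Continuous π)
    (hπs : Function.Surjective π) (hπo : IsOpenMap π) (F : CandidateSeq K) (γ : Ordinal)
    (x : M) :
    (F.comp π).u γ x = F.u γ (π x) :=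
  uSeq_comp_eq_of_isOpenMap_general π hπc hπo F γ x
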